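/- arXiv:math/0209387 — 5 statements merged into one kernel-verified Lean document; each statement's English description precedes it below -/
import Mathlib

section
/- Every Runge-Kutta method preserves linear foliations: if I : ℝᵐ → ℝᵏ is linear and the vector field X satisfies I(X(x)) = h(I(x)) for some function h (so the flow preserves the foliation by level sets of I), then the value of I at the Runge-Kutta update depends only on the value of I at the initial point. -/
/-- Runge-Kutta methods preserve linear foliations.  If `I : ℝᵐ → ℝᵏ` is
linear, the vector field `X` satisfies `I(X(x)) = h(I(x))`, and the stage equations of
the Runge-Kutta method applied to the reduced equation `İ = h(I)` have unique solutions,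
then there is a map `Φ` such that `I(x') = Φ(I(x))` for any Runge-Kutta step `x ↦ x'`:
the value of `I` at the update depends only on the value of `I` at the initial point. -/
theorem rungeKutta_preserves_linear_foliation
    (m k s : ℕ) (a : Fin s → Fin s → ℝ) (b : Fin s → ℝ) (τ : ℝ)
    (X : (Fin m → ℝ) → (Fin m → ℝ)) (I : (Fin m → ℝ) →ₗ[ℝ] (Fin k → ℝ))
    (h : (Fin k → ℝ) → (Fin k → ℝ))
    (hfol : ∀ x, I (X x) = h (I x))
    (huniq : ∀ v : Fin k → ℝ, ∃! Z : Fin s → (Fin k → ℝ),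
      ∀ i, Z i = v + τ • ∑ j, a i j • h (Z j)) :
    ∃ Φ : (Fin k → ℝ) → (Fin k → ℝ),
      ∀ (x : Fin m → ℝ) (Y : Fin s → (Fin m → ℝ)) (x' : Fin m → ℝ),
        (∀ i, Y i = x + τ • ∑ j, a i j • X (Y j)) →
        x' = x + τ • ∑ i, b i • X (Y i) →
        I x' = Φ (I x) := by
  choose Z hZ hZuniq using huniq
  refine ⟨fun v => v + τ • ∑ i, b i • h (Z v i), ?_⟩
  intro x Y x' hY hx'
  have key : (fun i => I (Y i)) = Z (I x) := by
    refine (hZuniq (I x) _ ?_).symm ▸ rfl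
    intro i
    simp only [hY i, map_add, map_smul, map_sum, hfol]
  subst hx'
  simp only [map_add, map_smul, map_sum, hfol]
  congr 1
  exact congrArg _ (Finset.sum_congr rfl fun i _ => by rw [congrFun key i])
end

section
/- The discrete gradient integrator (x'−x)/τ = (Ā(x,x') + h̄(I(x),I(x'))/|∇̄I(x,x')|²) ∇̄I(x,x') satisfies I(x') − I(x) = τ h̄(I(x),I(x')); in particular the update of I depends only on I(x), so the integrator is foliate with respect to the level sets of I. -/
open scoped RealInnerProductSpace

/-- The discrete gradient integrator
`(x'−x)/τ = (Ā(x,x') + h̄(I(x),I(x'))/‖∇̄I(x,x')‖²) ∇̄I(x,x')`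
satisfies `I(x') − I(x) = τ h̄(I(x), I(x'))`; in particular the update of `I` depends
only on `I(x)`, so the integrator is foliate with respect to the level sets of `I`. -/
theorem discrete_gradient_foliate (m : ℕ) (τ : ℝ) (hτ : 0 < τ)
    (I : EuclideanSpace ℝ (Fin m) → ℝ)
    (Db : EuclideanSpace ℝ (Fin m) → EuclideanSpace ℝ (Fin m) → EuclideanSpace ℝ (Fin m))
    (hDb : ∀ x x', ⟪Db x x', x' - x⟫ = I x' - I x)
    (hDbDiag : ∀ x, Db x x = gradient I x)
    (A : EuclideanSpace ℝ (Fin m) → EuclideanSpace ℝ (Fin m) →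
      (EuclideanSpace ℝ (Fin m) →ₗ[ℝ] EuclideanSpace ℝ (Fin m)))
    (hA : ∀ x x' v w, ⟪A x x' v, w⟫ = -⟪v, A x x' w⟫)
    (hbar : ℝ → ℝ → ℝ)
    (x x' : EuclideanSpace ℝ (Fin m)) (hgrad : Db x x' ≠ 0)
    (hscheme : x' - x =
      τ • (A x x' (Db x x') + (hbar (I x) (I x') / ‖Db x x'‖ ^ 2) • Db x x')) :
    I x' - I x = τ * hbar (I x) (I x') := by
  have hAzero : ⟪Db x x', A x x' (Db x x')⟫ = 0 := by
    have := hA x x' (Db x x') (Db x x')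
    rw [real_inner_comm] at this
    linarith
  have hnorm : ‖Db x x'‖ ^ 2 ≠ 0 := by
    simpa using hgrad
  have key := hDb x x'
  rw [hscheme, inner_smul_right, inner_add_right, hAzero, inner_smul_right,
    real_inner_self_eq_norm_sq] at key
  field_simp at key
  linarith
end

section
/- Let G act by isometries on a Riemannian manifold (M, ⟨,⟩), and let X = X^∥ + X^⊥ be the pointwise orthogonal decomposition of a vector field X into components tangent and perpendicular to the G-orbits. Then X is foliate with respect to the foliation by G-orbits if and only if X^⊥ is G-invariant. -/
open scoped RealInnerProductSpace

/-- Let a group act by isometries on Euclidean space, with Killing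
generator fields `ξM i` spanning the orbit distribution `D`, and let `X = X^∥ + X^⊥` be
the decomposition of a smooth vector field into a part tangent to the orbits and a part
perpendicular to the orbits.  Then `X` is foliate with respect to the foliation by orbits
(its bracket with the generators stays tangent) if and only if `X^⊥` is `G`-invariant
(infinitesimally: its Lie bracket with every generator vanishes). -/
theorem isometric_action_foliate_iff_perp_invariant (n : ℕ) {ι : Type*}
    (ξM : ι → EuclideanSpace ℝ (Fin n) → EuclideanSpace ℝ (Fin n))
    (hξ : ∀ i, ContDiff ℝ (⊤ : ℕ∞) (ξM i))
    (hKilling : ∀ i x v w,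
      ⟪(fderiv ℝ (ξM i) x) v, w⟫ + ⟪v, (fderiv ℝ (ξM i) x) w⟫ = 0)
    (D : EuclideanSpace ℝ (Fin n) → Submodule ℝ (EuclideanSpace ℝ (Fin n)))
    (hD : ∀ x, D x = Submodule.span ℝ (Set.range fun i => ξM i x))
    (htan : ∀ W : EuclideanSpace ℝ (Fin n) → EuclideanSpace ℝ (Fin n),
      ContDiff ℝ (⊤ : ℕ∞) W → (∀ x, W x ∈ D x) →
      ∀ i x, VectorField.lieBracket ℝ W (ξM i) x ∈ D x)
    (X Xpar Xperp : EuclideanSpace ℝ (Fin n) → EuclideanSpace ℝ (Fin n))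
    (hXs : ContDiff ℝ (⊤ : ℕ∞) X) (hpars : ContDiff ℝ (⊤ : ℕ∞) Xpar) (hperps : ContDiff ℝ (⊤ : ℕ∞) Xperp)
    (hdecomp : ∀ x, X x = Xpar x + Xperp x)
    (hpar : ∀ x, Xpar x ∈ D x)
    (hperp : ∀ x, Xperp x ∈ (D x)ᗮ) :
    (∀ i x, VectorField.lieBracket ℝ X (ξM i) x ∈ D x) ↔
    (∀ i x, VectorField.lieBracket ℝ (ξM i) Xperp x = 0) := by
  have hξd : ∀ i, Differentiable ℝ (ξM i) := fun i => (hξ i).differentiable (by simp)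
  have hperpd : Differentiable ℝ Xperp := hperps.differentiable (by simp)
  have hpard : Differentiable ℝ Xpar := hpars.differentiable (by simp)
  have hXd : Differentiable ℝ X := hXs.differentiable (by simp)
  have hmem : ∀ i x, ξM i x ∈ D x := by
    intro i x
    rw [hD x]
    exact Submodule.subset_span ⟨i, rfl⟩
  -- key: ⟪Xperp x, w⟫ = 0 for w ∈ D x
  have hperp0 : ∀ x w, w ∈ D x → ⟪Xperp x, w⟫ = 0 := fun x w hw =>
    ((Submodule.mem_orthogonal' (D x) (Xperp x)).1 (hperp x)) w hw
  -- key: the bracket [ξ i, Xperp] is always perpendicular to D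
  have key : ∀ i x, VectorField.lieBracket ℝ (ξM i) Xperp x ∈ (D x)ᗮ := by
    intro i x
    rw [Submodule.mem_orthogonal]
    intro u hu
    rw [hD x] at hu
    induction hu using Submodule.span_induction with
    | mem u hu =>
      obtain ⟨j, rfl⟩ := hu
      -- differentiate ⟪Xperp, ξM j⟫ ≡ 0 in direction ξM i x
      have hzero : (fun y => ⟪Xperp y, ξM j y⟫) = fun _ => (0 : ℝ) := by
        funext y
        exact hperp0 y (ξM j y) (hmem j y)
      have hder : fderiv ℝ (fun y => ⟪Xperp y, ξM j y⟫) x (ξM i x) = 0 := by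
        rw [hzero]; simp
      rw [fderiv_inner_apply ℝ (hperpd x) (hξd j x) (ξM i x)] at hder
      -- Killing identity for ξ i
      have hkil := hKilling i x (Xperp x) (ξM j x)
      -- bracket of generators is tangent
      have hbr : VectorField.lieBracket ℝ (ξM j) (ξM i) x ∈ D x :=
        htan (ξM j) (hξ j) (hmem j) i x
      have hbr0 : ⟪Xperp x, VectorField.lieBracket ℝ (ξM j) (ξM i) x⟫ = 0 :=
        hperp0 x _ hbr
      simp only [VectorField.lieBracket, inner_sub_right] at hbr0
      show ⟪ξM j x, VectorField.lieBracket ℝ (ξM i) Xperp x⟫ = 0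
      simp only [VectorField.lieBracket, inner_sub_right]
      rw [real_inner_comm (fderiv ℝ Xperp x (ξM i x)) (ξM j x),
        real_inner_comm (fderiv ℝ (ξM i) x (Xperp x)) (ξM j x)]
      linarith
    | zero => simp
    | add u v _ _ hu hv => rw [inner_add_left, hu, hv, add_zero]
    | smul c u _ hu => rw [inner_smul_left, hu, mul_zero]
  have hsplit : ∀ i x, VectorField.lieBracket ℝ X (ξM i) x
      = VectorField.lieBracket ℝ Xpar (ξM i) x + VectorField.lieBracket ℝ Xperp (ξM i) x := by
    intro i x
    have : X = Xpar + Xperp := funext hdecomp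
    rw [this, VectorField.lieBracket_add_left (hpard x) (hperpd x)]
  constructor
  · intro h i x
    have hmemD : VectorField.lieBracket ℝ Xperp (ξM i) x ∈ D x := by
      have := h i x
      rw [hsplit i x] at this
      have hpar' : VectorField.lieBracket ℝ Xpar (ξM i) x ∈ D x := htan Xpar hpars hpar i x
      have := (D x).sub_mem this hpar'
      simpa using this
    have hmemO : VectorField.lieBracket ℝ Xperp (ξM i) x ∈ (D x)ᗮ := by
      have := key i x
      rw [VectorField.lieBracket_swap] at this
      simpa using (D x)ᗮ.neg_mem this
    have : VectorField.lieBracket ℝ Xperp (ξM i) x = 0 := by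
      have := Submodule.inner_right_of_mem_orthogonal hmemD hmemO
      exact inner_self_eq_zero.1 (by rwa [real_inner_self_eq_norm_sq] at this ⊢)
    rw [VectorField.lieBracket_swap, this, neg_zero]
  · intro h i x
    rw [hsplit i x]
    have h0 : VectorField.lieBracket ℝ Xperp (ξM i) x = 0 := by
      rw [VectorField.lieBracket_swap, h i x, neg_zero]
    rw [h0, add_zero]
    exact htan Xpar hpars hpar i x
end

section
/- For the action of G = ℝ² on ℝ² given by λ((a,b),(x,y)) = (x, y + a + bx), the G-invariant vector fields are exactly those of the form d(x) ∂/∂y; consequently the foliate vector field ∂/∂x (i.e., ẋ = 1, ẏ = 0) cannot be written as the sum of a vector field tangent to the orbits and a G-invariant vector field. -/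
/-!
Bracketing with the constant field `∂/∂y` differentiates a field `W` in the `y`-direction, and
bracketing with `x ∂/∂y` gives `x · ∂W/∂y - (W₁) ∂/∂y`. So `W` is invariant iff it is constant along
the orbits and has no `∂/∂x`-component. Then `Xt + Xi` has vanishing `∂/∂x`-component, so it is not `∂/∂x`.
-/

open VectorField

lemma VectorField.lieBracket_const_left {𝕜 E : Type*} [NontriviallyNormedField 𝕜]
    [NormedAddCommGroup E] [NormedSpace 𝕜 E] (v : E) (W : E → E) (p : E) :
    lieBracket 𝕜 (fun _ => v) W p = fderiv 𝕜 W p v := by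
  simp [lieBracket]

lemma lieBracket_shearField_left (W : ℝ × ℝ → ℝ × ℝ) (p : ℝ × ℝ) :
    lieBracket ℝ (fun q : ℝ × ℝ => ((0 : ℝ), q.1)) W p
      = p.1 • fderiv ℝ W p (0, 1) - (0, (W p).1) := by
  have hη : fderiv ℝ (fun q : ℝ × ℝ => ((0 : ℝ), q.1)) p
      = (0 : ℝ × ℝ →L[ℝ] ℝ).prod (ContinuousLinearMap.fst ℝ ℝ ℝ) :=
    ((0 : ℝ × ℝ →L[ℝ] ℝ).prod (ContinuousLinearMap.fst ℝ ℝ ℝ)).fderiv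
  rw [lieBracket, hη, ← map_smul]
  simp

section Vertical

variable {F : Type*} [NormedAddCommGroup F] [NormedSpace ℝ F] {f : ℝ × ℝ → F}

lemma hasDerivAt_vertical_line (hf : Differentiable ℝ f) (x t : ℝ) :
    HasDerivAt (fun s => f (x, s)) (fderiv ℝ f (x, t) (0, 1)) t :=
  (hf (x, t)).hasFDerivAt.comp_hasDerivAt t ((hasDerivAt_const t x).prodMk (hasDerivAt_id t))

lemma forall_fderiv_vertical_eq_zero_iff (hf : Differentiable ℝ f) :
    (∀ p, fderiv ℝ f p (0, 1) = 0) ↔ ∃ f₀ : ℝ → F, ∀ p : ℝ × ℝ, f p = f₀ p.1 := by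
  constructor
  · intro h
    refine ⟨fun x => f (x, 0), fun p => ?_⟩
    exact is_const_of_deriv_eq_zero (fun t => (hasDerivAt_vertical_line hf p.1 t).differentiableAt)
      (fun t => by rw [(hasDerivAt_vertical_line hf p.1 t).deriv, h]) p.2 0
  · rintro ⟨f₀, hf₀⟩ p
    have hconst : (fun s => f (p.1, s)) = fun _ => f₀ p.1 := funext fun s => hf₀ (p.1, s)
    have h := hasDerivAt_vertical_line hf p.1 p.2
    rw [hconst] at h
    exact h.unique (hasDerivAt_const _ _)

end Vertical

lemma lieBracket_generators_eq_zero_iff (W : ℝ × ℝ → ℝ × ℝ) :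
    ((∀ p, lieBracket ℝ (fun _ => ((0 : ℝ), (1 : ℝ))) W p = 0) ∧
      (∀ p, lieBracket ℝ (fun q : ℝ × ℝ => ((0 : ℝ), q.1)) W p = 0)) ↔
    (∀ p, fderiv ℝ W p (0, 1) = 0) ∧ ∀ p, (W p).1 = 0 := by
  simp only [VectorField.lieBracket_const_left, lieBracket_shearField_left]
  constructor
  · rintro ⟨hξ, hη⟩
    refine ⟨hξ, fun p => ?_⟩
    simpa [hξ p] using congrArg Prod.snd (hη p)
  · rintro ⟨hξ, hvert⟩
    exact ⟨hξ, fun p => by simp [hξ p, hvert p]⟩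

/-- For the action of `G = ℝ²` on `ℝ²` given by
`λ((a,b),(x,y)) = (x, y + a + bx)`, with infinitesimal generators `ξ_M = ∂/∂y` and
`η_M = x ∂/∂y`, the `G`-invariant vector fields (those commuting with both generators)
are exactly those of the form `d(x) ∂/∂y`.  Consequently the foliate vector field
`∂/∂x` cannot be written as the sum of a vector field tangent to the orbits (vertical)
and a `G`-invariant vector field. -/
theorem counterexample_no_tangent_invariant_decomposition :
    (∀ c d : ℝ × ℝ → ℝ, Differentiable ℝ c → Differentiable ℝ d →
      (((∀ p : ℝ × ℝ,
          VectorField.lieBracket ℝ (fun _ => ((0 : ℝ), (1 : ℝ)))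
            (fun q => (c q, d q)) p = 0) ∧
        (∀ p : ℝ × ℝ,
          VectorField.lieBracket ℝ (fun q : ℝ × ℝ => ((0 : ℝ), q.1))
            (fun q => (c q, d q)) p = 0)) ↔
        ((∀ p, c p = 0) ∧ ∃ d0 : ℝ → ℝ, ∀ p : ℝ × ℝ, d p = d0 p.1))) ∧
    ¬ ∃ Xt Xi : ℝ × ℝ → ℝ × ℝ, Differentiable ℝ Xi ∧
        (∀ p, (Xt p).1 = 0) ∧
        (∀ p : ℝ × ℝ,
          VectorField.lieBracket ℝ (fun _ => ((0 : ℝ), (1 : ℝ))) Xi p = 0) ∧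
        (∀ p : ℝ × ℝ,
          VectorField.lieBracket ℝ (fun q : ℝ × ℝ => ((0 : ℝ), q.1)) Xi p = 0) ∧
        (∀ p, Xt p + Xi p = ((1 : ℝ), (0 : ℝ))) := by
  refine ⟨fun c d hc hd => ?_, ?_⟩
  · rw [lieBracket_generators_eq_zero_iff, forall_fderiv_vertical_eq_zero_iff (hc.prodMk hd)]
    constructor
    · rintro ⟨⟨W₀, hW₀⟩, hc₀⟩
      exact ⟨hc₀, fun x => (W₀ x).2, fun p => congrArg Prod.snd (hW₀ p)⟩
    · rintro ⟨hc₀, d₀, hd₀⟩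
      exact ⟨⟨fun x => (0, d₀ x), fun p => by simp [hc₀ p, hd₀ p]⟩, hc₀⟩
  · rintro ⟨Xt, Xi, -, hXt, hξ, hη, hsum⟩
    have hXi : ∀ p, (Xi p).1 = 0 := ((lieBracket_generators_eq_zero_iff Xi).mp ⟨hξ, hη⟩).2
    simpa [hXt 0, hXi 0] using congrArg Prod.fst (hsum 0)
end

section
/- The Lie-Euler foliate integrator A_{n+1} = exp(τ g(A_n))(A_n + τ f(A_n)) for the system Ȧ = g(A)A + f(A), where g takes values in 𝔰𝔬(n) and f is SO(n)-invariant with f(A) = A V(AᵀA), is foliate: A_{n+1}ᵀ A_{n+1} depends only on A_nᵀ A_n, namely A_{n+1}ᵀA_{n+1} = (I + τV(A_nᵀA_n))ᵀ (A_nᵀA_n)(I + τV(A_nᵀA_n)). -/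
/-!
`exp(τ g(A))` is orthogonal because `τ g(A)` is skew-symmetric, so it drops out of `A'ᵀA'`.
The Euler part factors as `A + τ A V(AᵀA) = A (1 + τ V(AᵀA))`, whose Gram matrix is
`(1 + τV)ᵀ (AᵀA) (1 + τV)`.
-/

open Matrix

namespace Matrix

variable {m n k : Type*}

theorem exp_mem_orthogonalGroup_of_transpose_eq_neg [Fintype m] [DecidableEq m] {𝔸 : Type*}
    [NormedCommRing 𝔸] [NormedAlgebra ℚ 𝔸] [CompleteSpace 𝔸] {S : Matrix m m 𝔸}
    (hS : Sᵀ = -S) : NormedSpace.exp S ∈ orthogonalGroup m 𝔸 := by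
  rw [mem_orthogonalGroup_iff', ← exp_transpose, hS, exp_neg]
  exact nonsing_inv_mul _ ((isUnit_iff_isUnit_det _).mp (isUnit_exp S))

theorem transpose_mul_self_orthogonal_mul [Fintype m] [DecidableEq m] [Fintype n] {R : Type*}
    [CommRing R] {Q : Matrix m m R} (hQ : Q ∈ orthogonalGroup m R) (B : Matrix m n R) :
    (Q * B)ᵀ * (Q * B) = Bᵀ * B := by
  rw [transpose_mul, Matrix.mul_assoc, ← Matrix.mul_assoc Qᵀ,
    (mem_orthogonalGroup_iff' m R).mp hQ, Matrix.one_mul]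

theorem transpose_mul_self_mul [Fintype m] [Fintype n] {R : Type*} [CommRing R]
    (A : Matrix m n R) (M : Matrix n k R) :
    (A * M)ᵀ * (A * M) = Mᵀ * (Aᵀ * A) * M := by
  simp only [transpose_mul, Matrix.mul_assoc]

end Matrix

/-- The Lie-Euler integrator `A' = exp(τ g(A))(A + τ f(A))` for
`Ȧ = g(A)A + f(A)`, with `g(A)` skew-symmetric and `f(A) = A V(AᵀA)`, is foliate for the
foliation of `ℝ^{n×p}` by level sets of `AᵀA`: the updated value of `AᵀA` depends only on
the old one, namely `A'ᵀA' = (1 + τV(AᵀA))ᵀ (AᵀA) (1 + τV(AᵀA))`. -/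
theorem lie_euler_foliate (n p : ℕ) (τ : ℝ)
    (V : Matrix (Fin p) (Fin p) ℝ → Matrix (Fin p) (Fin p) ℝ)
    (g : Matrix (Fin n) (Fin p) ℝ → Matrix (Fin n) (Fin n) ℝ)
    (hg : ∀ A, (g A)ᵀ = -(g A))
    (A : Matrix (Fin n) (Fin p) ℝ) :
    (NormedSpace.exp (τ • g A) * (A + τ • (A * V (Aᵀ * A))))ᵀ *
      (NormedSpace.exp (τ • g A) * (A + τ • (A * V (Aᵀ * A)))) =
    (1 + τ • V (Aᵀ * A))ᵀ * (Aᵀ * A) * (1 + τ • V (Aᵀ * A)) := by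
  have hrot : NormedSpace.exp (τ • g A) ∈ orthogonalGroup (Fin n) ℝ :=
    exp_mem_orthogonalGroup_of_transpose_eq_neg (by rw [transpose_smul, hg, smul_neg])
  have heuler : A + τ • (A * V (Aᵀ * A)) = A * (1 + τ • V (Aᵀ * A)) := by
    rw [Matrix.mul_add, Matrix.mul_one, Matrix.mul_smul]
  rw [transpose_mul_self_orthogonal_mul hrot, heuler, transpose_mul_self_mul]
end
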